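/- In the Nussinov-Jacobson model with pair energies α (G–C), β (A–U), γ (G–U) satisfying α,β,γ < 0 and α,β < γ, let 0 < Δ_N ≤ min(|α|,|β|). If a structure S admits an A-unpaired Watson-Crick 1-design w (all unpaired positions of S carry letter A), then w is also a Δ_N-design for S in the Nussinov-Jacobson model. -/

import Mathlib

open scoped Classical

/-- An RNA nucleotide. -/
inductive Base | A | U | C | G
deriving DecidableEq, Inhabited, Repr

/-- The Watson-Crick pairing relation (only G-C and A-U pairs allowed). -/
def wcPair : Base → Base → Prop
  | .G, .C => True | .C, .G => True
  | .A, .U => True | .U, .A => True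
  | _, _ => False

/-- The Nussinov-Jacobson pairing relation (G-C, A-U and G-U pairs allowed). -/
def njPair : Base → Base → Prop
  | .G, .C => True | .C, .G => True
  | .A, .U => True | .U, .A => True
  | .G, .U => True | .U, .G => True
  | _, _ => False

/-- An RNA (pseudoknot-free) secondary structure, 0-indexed positions. -/
structure SecStr where
  len : ℕ
  pairs : Finset (ℕ × ℕ)
  lt : ∀ p ∈ pairs, p.1 < p.2
  ub : ∀ p ∈ pairs, p.2 < len
  once : ∀ p ∈ pairs, ∀ q ∈ pairs, p ≠ q →
    p.1 ≠ q.1 ∧ p.1 ≠ q.2 ∧ p.2 ≠ q.1 ∧ p.2 ≠ q.2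
  noncross : ∀ p ∈ pairs, ∀ q ∈ pairs,
    ¬ (p.1 < q.1 ∧ q.1 < p.2 ∧ p.2 < q.2)

def SecStr.pairedAt (S : SecStr) (i : ℕ) : Prop := ∃ p ∈ S.pairs, p.1 = i ∨ p.2 = i
def SecStr.unpairedAt (S : SecStr) (i : ℕ) : Prop := i < S.len ∧ ¬ S.pairedAt i
def SecStr.saturated (S : SecStr) : Prop := ∀ i < S.len, S.pairedAt i

/-- A structure is compatible with a sequence `w` (w.r.t. pairing relation `R`)
if it has the right length and all base pairs are `R`-valid. -/
def compat {α : Type*} [Inhabited α] (R : α → α → Prop) (w : List α) (S : SecStr) : Prop :=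
  S.len = w.length ∧ ∀ p ∈ S.pairs, R (w.getD p.1 default) (w.getD p.2 default)

/-- Base-pair-sum free energy of a structure on a sequence. -/
noncomputable def energy {α : Type*} [Inhabited α] (E : α → α → ℝ) (w : List α)
    (S : SecStr) : ℝ :=
  ∑ p ∈ S.pairs, E (w.getD p.1 default) (w.getD p.2 default)

/-- `w` is a Δ-design for `S`: `S` is compatible with `w`, and every other
compatible structure has energy at least `energy E w S + Δ`. -/
def isDesign {α : Type*} [Inhabited α] (R : α → α → Prop) (E : α → α → ℝ) (Δ : ℝ)
    (w : List α) (S : SecStr) : Prop :=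
  compat R w S ∧ ∀ S' : SecStr, compat R w S' → S' ≠ S →
    energy E w S' ≥ energy E w S + Δ

/- Tree representation machinery. -/
def encloses (q p : ℕ × ℕ) : Prop := q.1 < p.1 ∧ p.2 < q.2
def SecStr.hasParent (S : SecStr) (p : ℕ × ℕ) : Prop := ∃ q ∈ S.pairs, encloses q p
def SecStr.isParentOf (S : SecStr) (q p : ℕ × ℕ) : Prop :=
  q ∈ S.pairs ∧ p ∈ S.pairs ∧ encloses q p ∧ ¬ ∃ m ∈ S.pairs, encloses q m ∧ encloses m p

/-- Degree of a paired node: number of paired children plus one for the parent (if any). -/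
noncomputable def SecStr.pairDeg (S : SecStr) (p : ℕ × ℕ) : ℕ :=
  (S.pairs.filter (fun c => S.isParentOf p c)).card + (if S.hasParent p then 1 else 0)
/-- Degree of the virtual root: number of top-level base pairs. -/
noncomputable def SecStr.rootDeg (S : SecStr) : ℕ :=
  (S.pairs.filter (fun p => ¬ S.hasParent p)).card
/-- All nodes of the tree representation (including the virtual root) have degree ≤ d. -/
def SecStr.degLE (S : SecStr) (d : ℕ) : Prop :=
  S.rootDeg ≤ d ∧ ∀ p ∈ S.pairs, S.pairDeg p ≤ d

/-- A sequence is saturable if a saturated structure is compatible with it. -/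
def saturable {α : Type*} [Inhabited α] (R : α → α → Prop) (w : List α) : Prop :=
  ∃ S : SecStr, compat R w S ∧ S.saturated
/-- Atomic saturable: saturable, and no (nonempty) proper prefix is saturable. -/
def atomicSaturable {α : Type*} [Inhabited α] (R : α → α → Prop) (w : List α) : Prop :=
  saturable R w ∧ ∀ k, 0 < k → k < w.length → ¬ saturable R (w.take k)

/- Motifs. -/
def SecStr.unpChildOfPair (S : SecStr) (q : ℕ × ℕ) (u : ℕ) : Prop :=
  S.unpairedAt u ∧ q.1 < u ∧ u < q.2 ∧
    ¬ ∃ m ∈ S.pairs, q.1 < m.1 ∧ m.1 < u ∧ u < m.2 ∧ m.2 < q.2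
def SecStr.unpChildOfRoot (S : SecStr) (u : ℕ) : Prop :=
  S.unpairedAt u ∧ ¬ ∃ m ∈ S.pairs, m.1 < u ∧ u < m.2
/-- Motif m₅ : a tree node (possibly the root) of degree greater than four. -/
def hasM5 (S : SecStr) : Prop := 4 < S.rootDeg ∨ ∃ p ∈ S.pairs, 4 < S.pairDeg p
/-- Motif m₃∘ : a node with an unpaired child and degree greater than two. -/
def hasM3o (S : SecStr) : Prop :=
  (∃ q ∈ S.pairs, (∃ u, S.unpChildOfPair q u) ∧ 2 < S.pairDeg q) ∨
  ((∃ u, S.unpChildOfRoot u) ∧ 2 < S.rootDeg)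

/- Colorings of the tree representation. -/
inductive Col | black | white | gray
deriving DecidableEq

noncomputable def childCount (S : SecStr) (col : ℕ × ℕ → Col) (q : ℕ × ℕ) (c : Col) : ℕ :=
  (S.pairs.filter (fun p => S.isParentOf q p ∧ col p = c)).card
noncomputable def rootChildCount (S : SecStr) (col : ℕ × ℕ → Col) (c : Col) : ℕ :=
  (S.pairs.filter (fun p => ¬ S.hasParent p ∧ col p = c)).card

/-- A proper coloring of the tree representation. -/
def properCol (S : SecStr) (col : ℕ × ℕ → Col) : Prop :=
  rootChildCount S col .black ≤ 1 ∧ rootChildCount S col .white ≤ 1 ∧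
  rootChildCount S col .gray ≤ 2 ∧
  ∀ q ∈ S.pairs,
    childCount S col q .black ≤ 1 ∧ childCount S col q .white ≤ 1 ∧
    childCount S col q .gray ≤ 2 ∧
    childCount S col q (col q) ≤ 1 ∧
    (col q = .black → ∀ p ∈ S.pairs, S.isParentOf q p → col p ≠ .white) ∧
    (col q = .white → ∀ p ∈ S.pairs, S.isParentOf q p → col p ≠ .black)

/-- Level of a paired node: #black minus #white on the path to the root (incl. itself). -/
noncomputable def pairLvl (S : SecStr) (col : ℕ × ℕ → Col) (p : ℕ × ℕ) : ℤ :=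
  ((S.pairs.filter (fun q => q.1 ≤ p.1 ∧ p.2 ≤ q.2 ∧ col q = .black)).card : ℤ) -
  ((S.pairs.filter (fun q => q.1 ≤ p.1 ∧ p.2 ≤ q.2 ∧ col q = .white)).card : ℤ)
/-- Level of an unpaired node. -/
noncomputable def unpLvl (S : SecStr) (col : ℕ × ℕ → Col) (u : ℕ) : ℤ :=
  ((S.pairs.filter (fun q => q.1 < u ∧ u < q.2 ∧ col q = .black)).card : ℤ) -
  ((S.pairs.filter (fun q => q.1 < u ∧ u < q.2 ∧ col q = .white)).card : ℤ)

/-- Separated coloring: gray-node levels and unpaired-node levels are disjoint. -/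
def separatedCol (S : SecStr) (col : ℕ × ℕ → Col) : Prop :=
  ∀ p ∈ S.pairs, col p = .gray → ∀ u, S.unpairedAt u →
    pairLvl S col p ≠ unpLvl S col u

/-- A bipartite energy model: its compatibility graph is bipartite. -/
def Bipartite {α : Type*} (R : α → α → Prop) : Prop :=
  ∃ f : α → Bool, ∀ a b, R a b → f a ≠ f b

/-- The k-stutter of a sequence. -/
def stutterSeq {α : Type*} (w : List α) (k : ℕ) : List α :=
  w.flatMap (fun a => List.replicate k a)
/-- The base pairs of the k-stutter of a structure. -/
def stutterPairs (S : SecStr) (k : ℕ) : Finset (ℕ × ℕ) :=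
  S.pairs.biUnion (fun p => (Finset.range k).image
    (fun m => (k * p.1 + m, k * p.2 + (k - 1 - m))))

/-- Two base pairs belong to the same band (maximal stack) of S. -/
def sameBand (S : SecStr) (p p' : ℕ × ℕ) : Prop :=
  p ∈ S.pairs ∧ p' ∈ S.pairs ∧ p.1 + p.2 = p'.1 + p'.2 ∧
  ∀ x, min p.1 p'.1 ≤ x → x ≤ max p.1 p'.1 → (x, p.1 + p.2 - x) ∈ S.pairs

/-- Nussinov-Jacobson energies: a for G-C, b for A-U, g for G-U. -/
def njE (a b g : ℝ) : Base → Base → ℝ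
  | .G, .C => a | .C, .G => a
  | .A, .U => b | .U, .A => b
  | .G, .U => g | .U, .G => g
  | _, _ => 0

/-- level of position i : #G minus #C in the prefix of w ending at i. -/
def lvl (w : List Base) (i : ℕ) : ℤ :=
  ((w.take (i+1)).count Base.G : ℤ) - ((w.take (i+1)).count Base.C : ℤ)

/-! Since the unpaired positions of `S` carry `A` and `S` is Watson–Crick compatible, every `G`
of `w` is paired in `S` with a `C` and every `U` with an `A`: `S` has `#G` G–C pairs, `#U` A–U
pairs and no G–U pair. In any other compatible `S'` each position lies in at most one pair, so
its G–C and G–U pairs together number at most `#G`, and its A–U and G–U pairs at most `#U`.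
If `S'` has `k ≥ 1` G–U pairs, it loses at least `k` pairs of each Watson–Crick kind, so its
energy exceeds that of `S` by at least `k (g - a - b) ≥ -b ≥ Δ`. If it has none, it is
Watson–Crick compatible, and the 1-design property makes it lose at least one G–C or A–U pair,
at a cost of at least `min (-a) (-b) ≥ Δ`. -/

lemma wcPair_symm {x y : Base} (h : wcPair x y) : wcPair y x := by
  cases x <;> cases y <;> simp_all [wcPair]

lemma wcPair_irrefl (x : Base) : ¬ wcPair x x := by
  cases x <;> simp [wcPair]

lemma njPair_of_wcPair {x y : Base} (h : wcPair x y) : njPair x y := by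
  cases x <;> cases y <;> simp_all [wcPair, njPair]

lemma eq_C_of_wcPair_G {z : Base} (h : wcPair .G z) : z = .C := by
  cases z <;> first | rfl | exact h.elim

lemma eq_A_of_wcPair_U {z : Base} (h : wcPair .U z) : z = .A := by
  cases z <;> first | rfl | exact h.elim

lemma compat_mono {α : Type*} [Inhabited α] {R R' : α → α → Prop} {w : List α} {T : SecStr}
    (hRR' : ∀ x y, R x y → R' x y) (h : compat R w T) : compat R' w T :=
  ⟨h.1, fun p hp => hRR' _ _ (h.2 p hp)⟩

noncomputable def pairsOfType (w : List Base) (T : SecStr) (x y : Base) : Finset (ℕ × ℕ) :=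
  T.pairs.filter fun p => s(w.getD p.1 default, w.getD p.2 default) = s(x, y)

noncomputable def positionsOf (w : List Base) (x : Base) : Finset ℕ :=
  (Finset.range w.length).filter fun i => w.getD i default = x

lemma pairsOfType_comm (w : List Base) (T : SecStr) (x y : Base) :
    pairsOfType w T x y = pairsOfType w T y x := by
  simp only [pairsOfType, Sym2.eq_swap]

lemma SecStr.injOn_of_endpoint (T : SecStr) {f : ℕ × ℕ → ℕ}
    (hf : ∀ p ∈ T.pairs, f p = p.1 ∨ f p = p.2) : Set.InjOn f T.pairs := by
  intro p hp q hq hpq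
  by_contra hne
  have := T.once p hp q hq hne
  rcases hf p hp with h₁ | h₁ <;> rcases hf q hq with h₂ | h₂ <;> simp_all

lemma card_pairsOfType_add_le_card_positionsOf {w : List Base} {T : SecStr}
    (hT : T.len = w.length) {x y z : Base} (hyz : y ≠ z) :
    (pairsOfType w T x y).card + (pairsOfType w T x z).card ≤ (positionsOf w x).card := by
  have hdisj : Disjoint (pairsOfType w T x y) (pairsOfType w T x z) :=
    Finset.disjoint_filter.mpr fun _ _ hy hz => hyz (Sym2.congr_right.mp (hy.symm.trans hz))
  have hsub : pairsOfType w T x y ∪ pairsOfType w T x z ⊆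
      T.pairs.filter fun p => w.getD p.1 default = x ∨ w.getD p.2 default = x := by
    intro p hp
    simp only [Finset.mem_union, pairsOfType, Finset.mem_filter] at hp ⊢
    rcases hp with ⟨hp, h⟩ | ⟨hp, h⟩ <;>
      exact ⟨hp, (Sym2.mem_iff.mp (h ▸ Sym2.mem_mk_left x _)).imp Eq.symm Eq.symm⟩
  rw [← Finset.card_union_of_disjoint hdisj]
  refine (Finset.card_le_card hsub).trans <|
    Finset.card_le_card_of_injOn (fun p => if w.getD p.1 default = x then p.1 else p.2) ?_ ?_
  · intro p hp
    rw [Finset.mem_coe, Finset.mem_filter] at hp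
    have hlt := T.lt p hp.1
    have hub := T.ub p hp.1
    rw [Finset.mem_coe, positionsOf, Finset.mem_filter, Finset.mem_range]
    dsimp only
    split_ifs with h
    · exact ⟨by omega, h⟩
    · exact ⟨by omega, hp.2.resolve_left h⟩
  · refine (T.injOn_of_endpoint fun p _ => ?_).mono
      (Finset.coe_subset.mpr (Finset.filter_subset _ _))
    split_ifs <;> simp

lemma card_positionsOf_le_card_pairsOfType {w : List Base} {S : SecStr}
    (hS : compat wcPair w S) (hunp : ∀ i, S.unpairedAt i → w.getD i default = Base.A)
    {x y : Base} (hx : x ≠ .A) (hxy : ∀ z, wcPair x z → z = y) :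
    (positionsOf w x).card ≤ (pairsOfType w S x y).card := by
  refine Finset.card_le_card_of_surjOn (fun p => if w.getD p.1 default = x then p.1 else p.2) ?_
  intro i hi
  rw [Finset.mem_coe, positionsOf, Finset.mem_filter, Finset.mem_range] at hi
  have hpaired : S.pairedAt i := by
    by_contra h
    exact hx (hi.2.symm.trans (hunp i ⟨hS.1 ▸ hi.1, h⟩))
  obtain ⟨p, hp, rfl | rfl⟩ := hpaired
  · have hy := hxy _ (hi.2 ▸ hS.2 p hp)
    refine ⟨p, Finset.mem_filter.mpr ⟨hp, by rw [hi.2, hy]⟩, if_pos hi.2⟩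
  · have hy := hxy _ (wcPair_symm (hi.2 ▸ hS.2 p hp))
    have hyx : w.getD p.1 default ≠ x := fun h => by
      have hpair := hS.2 p hp
      rw [h, hi.2] at hpair
      exact wcPair_irrefl x hpair
    refine ⟨p, Finset.mem_filter.mpr ⟨hp, by rw [hi.2, hy, Sym2.eq_swap]⟩, if_neg hyx⟩

lemma pairsOfType_G_U_eq_empty {w : List Base} {T : SecStr} (hT : compat wcPair w T) :
    pairsOfType w T .G .U = ∅ := by
  refine Finset.filter_false_of_mem fun p hp hGU => ?_
  have := hT.2 p hp
  revert hGU this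
  cases w.getD p.1 default <;> cases w.getD p.2 default <;> simp [wcPair]

lemma compat_wcPair_of_pairsOfType_G_U_eq_empty {w : List Base} {T : SecStr}
    (hT : compat njPair w T) (hGU : pairsOfType w T .G .U = ∅) : compat wcPair w T := by
  refine ⟨hT.1, fun p hp => ?_⟩
  have hnot : p ∉ pairsOfType w T .G .U := hGU ▸ Finset.notMem_empty p
  have := hT.2 p hp
  simp only [pairsOfType, Finset.mem_filter, not_and] at hnot
  revert this hnot
  cases w.getD p.1 default <;> cases w.getD p.2 default <;> simp_all [wcPair, njPair]

lemma njE_eq_of_njPair (a b g : ℝ) {x y : Base} (h : njPair x y) :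
    njE a b g x y = a * (if s(x, y) = s(.G, .C) then 1 else 0)
      + b * (if s(x, y) = s(.U, .A) then 1 else 0)
      + g * (if s(x, y) = s(.G, .U) then 1 else 0) := by
  cases x <;> cases y <;> simp_all [njE, njPair]

lemma energy_njE (a b g : ℝ) {w : List Base} {T : SecStr} (hT : compat njPair w T) :
    energy (njE a b g) w T = a * (pairsOfType w T .G .C).card
      + b * (pairsOfType w T .U .A).card + g * (pairsOfType w T .G .U).card := by
  rw [energy, Finset.sum_congr rfl fun p hp => njE_eq_of_njPair a b g (hT.2 p hp)]
  simp only [Finset.sum_add_distrib, ← Finset.mul_sum, pairsOfType, Finset.card_filter,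
    Nat.cast_sum, Nat.cast_ite, Nat.cast_one, Nat.cast_zero]

lemma energy_const_eq_energy_njE (c : ℝ) {w : List Base} {T : SecStr} (hT : compat njPair w T) :
    energy (fun _ _ => c) w T = energy (njE c c c) w T := by
  refine Finset.sum_congr rfl fun p hp => ?_
  have := hT.2 p hp
  revert this
  cases w.getD p.1 default <;> cases w.getD p.2 default <;> simp [njE, njPair]

lemma card_pairs_eq_of_compat_njPair {w : List Base} {T : SecStr} (hT : compat njPair w T) :
    T.pairs.card = (pairsOfType w T .G .C).card + (pairsOfType w T .U .A).card
      + (pairsOfType w T .G .U).card := by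
  have h := energy_njE 1 1 1 hT
  rw [← energy_const_eq_energy_njE 1 hT, energy, Finset.sum_const, nsmul_one] at h
  simp only [one_mul] at h
  exact_mod_cast h

lemma card_pairs_lt_of_isDesign {α : Type*} [Inhabited α] {R : α → α → Prop} {w : List α}
    {S T : SecStr} (hS : isDesign R (fun _ _ => (-1 : ℝ)) 1 w S) (hT : compat R w T)
    (hne : T ≠ S) : T.pairs.card < S.pairs.card := by
  have h := hS.2 T hT hne
  simp only [energy, Finset.sum_const, nsmul_eq_mul, mul_neg, mul_one] at h
  exact_mod_cast (by linarith : (T.pairs.card : ℝ) < S.pairs.card)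

lemma energy_gap_of_counts {a b g Δ : ℝ} (hag : a < g) (hΔ : 0 < Δ) (hΔa : Δ ≤ -a)
    (hΔb : Δ ≤ -b) {n₁ n₂ m₁ m₂ k : ℕ} (h₁ : m₁ + k ≤ n₁) (h₂ : m₂ + k ≤ n₂)
    (h₀ : k = 0 → m₁ + m₂ + 1 ≤ n₁ + n₂) :
    a * m₁ + b * m₂ + g * k ≥ a * n₁ + b * n₂ + Δ := by
  have h₁' : (m₁ : ℝ) + k ≤ n₁ := by exact_mod_cast h₁
  have h₂' : (m₂ : ℝ) + k ≤ n₂ := by exact_mod_cast h₂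
  rcases Nat.eq_zero_or_pos k with rfl | hk
  · have h₀' : (m₁ : ℝ) + m₂ + 1 ≤ n₁ + n₂ := by exact_mod_cast h₀ rfl
    push_cast at h₁' h₂' ⊢
    nlinarith
  · have hk' : (1 : ℝ) ≤ k := by exact_mod_cast hk
    nlinarith

theorem stmt19_general (a b g : ℝ) (hag : a < g)
    (Δ : ℝ) (hΔ1 : 0 < Δ) (hΔ2 : Δ ≤ min (-a) (-b))
    (w : List Base) (S : SecStr)
    (hdes : isDesign wcPair (fun _ _ => (-1 : ℝ)) 1 w S)
    (hunp : ∀ i, S.unpairedAt i → w.getD i default = Base.A) :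
    isDesign njPair (njE a b g) Δ w S := by
  have hwcS := hdes.1
  have hnjS : compat njPair w S := compat_mono (fun _ _ => njPair_of_wcPair) hwcS
  have hGU := pairsOfType_G_U_eq_empty hwcS
  refine ⟨hnjS, fun S' hS' hne => ?_⟩
  have hG : (pairsOfType w S' .G .C).card + (pairsOfType w S' .G .U).card ≤
      (pairsOfType w S .G .C).card :=
    (card_pairsOfType_add_le_card_positionsOf hS'.1 (by decide)).trans
      (card_positionsOf_le_card_pairsOfType hwcS hunp (by decide)
        fun _ => eq_C_of_wcPair_G)
  have hU : (pairsOfType w S' .U .A).card + (pairsOfType w S' .G .U).card ≤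
      (pairsOfType w S .U .A).card := by
    rw [pairsOfType_comm w S' .G]
    exact (card_pairsOfType_add_le_card_positionsOf hS'.1 (by decide)).trans
      (card_positionsOf_le_card_pairsOfType hwcS hunp (by decide)
        fun _ => eq_A_of_wcPair_U)
  have hWC (hGU' : (pairsOfType w S' .G .U).card = 0) :
      (pairsOfType w S' .G .C).card + (pairsOfType w S' .U .A).card + 1 ≤
        (pairsOfType w S .G .C).card + (pairsOfType w S .U .A).card := by
    have hlt := card_pairs_lt_of_isDesign hdes
      (compat_wcPair_of_pairsOfType_G_U_eq_empty hS' (Finset.card_eq_zero.mp hGU')) hne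
    rw [card_pairs_eq_of_compat_njPair hS', card_pairs_eq_of_compat_njPair hnjS, hGU] at hlt
    simpa [hGU'] using hlt
  rw [energy_njE _ _ _ hS', energy_njE _ _ _ hnjS, hGU, Finset.card_empty, Nat.cast_zero,
    mul_zero, add_zero]
  exact energy_gap_of_counts hag hΔ1 (hΔ2.trans (min_le_left _ _))
    (hΔ2.trans (min_le_right _ _)) hG hU hWC

/-- an A-unpaired Watson-Crick 1-design for S is also a
Δ_N-design for S in the Nussinov-Jacobson model, for 0 < Δ_N ≤ min(|α|,|β|). -/
theorem stmt19 (a b g : ℝ) (ha : a < 0) (hb : b < 0) (hg : g < 0)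
    (hag : a < g) (hbg : b < g)
    (Δ : ℝ) (hΔ1 : 0 < Δ) (hΔ2 : Δ ≤ min (-a) (-b))
    (w : List Base) (S : SecStr)
    (hdes : isDesign wcPair (fun _ _ => (-1 : ℝ)) 1 w S)
    (hunp : ∀ i, S.unpairedAt i → w.getD i default = Base.A) :
    isDesign njPair (njE a b g) Δ w S :=
  stmt19_general a b g hag Δ hΔ1 hΔ2 w S hdes hunp
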